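/- arXiv:2004.01840 — 7 statements merged into one kernel-verified Lean document; each statement's English description precedes it below -/
import Mathlib

section
/- For all classifiers t and c on a finite universe X of n ≥ 2 individuals, C(t→c) = C(t→f(c)); hence for every δ ≥ 0, c ∈ Γ_δ(t) if and only if f(c) ∈ Γ_δ(t). In particular, the transportation cost from any classifier to its own flip is zero: C(t→f(t)) = 0, so f(t) ∈ Γ_δ(t) for every δ ≥ 0. -/
open Finset

namespace Oracle

variable {n : ℕ}

def zeros (c : Fin n → Bool) : Finset (Fin n) := Finset.univ.filter (fun i => c i = false)

def ones (c : Fin n → Bool) : Finset (Fin n) := Finset.univ.filter (fun i => c i = true)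

def flip (c : Fin n → Bool) : Fin n → Bool := fun i => !(c i)

/-- Transportation cost `C(t → c)`: the fraction, among all `n.choose 2` unordered pairs
of distinct individuals, of pairs treated the same by `t` but differently by `c`.
Unordered pairs `{i,j}` with `i ≠ j` are represented as ordered pairs with `p.1 < p.2`. -/
noncomputable def cost (t c : Fin n → Bool) : ℝ :=
  ((Finset.univ.filter
      (fun p : Fin n × Fin n => p.1 < p.2 ∧ t p.1 = t p.2 ∧ c p.1 ≠ c p.2)).card : ℝ)
    / (n.choose 2 : ℝ)

lemma flip_apply_eq_flip_apply_iff (c : Fin n → Bool) (i j : Fin n) :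
    flip c i = flip c j ↔ c i = c j :=
  Bool.not_inj_iff

lemma cost_flip (t c : Fin n → Bool) : cost t (flip c) = cost t c := by
  simp only [cost, ne_eq, flip_apply_eq_flip_apply_iff]

lemma cost_self (t : Fin n → Bool) : cost t t = 0 := by
  have hempty : univ.filter (fun p : Fin n × Fin n => p.1 < p.2 ∧ t p.1 = t p.2 ∧ t p.1 ≠ t p.2)
      = ∅ :=
    filter_false_of_mem fun _ _ ⟨_, heq, hne⟩ => hne heq
  simp only [cost, hempty, card_empty, Nat.cast_zero, zero_div]

lemma cost_flip_self (t : Fin n → Bool) : cost t (flip t) = 0 :=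
  (cost_flip t t).trans (cost_self t)

theorem cost_flip_right_general {n : ℕ} (t c : Fin n → Bool) :
    cost t c = cost t (flip c) ∧
    (∀ δ : ℝ, 0 ≤ δ → (cost t c ≤ δ ↔ cost t (flip c) ≤ δ)) ∧
    cost t (flip t) = 0 ∧
    (∀ δ : ℝ, 0 ≤ δ → cost t (flip t) ≤ δ) := by
  refine ⟨(cost_flip t c).symm, fun δ _ => by rw [cost_flip], cost_flip_self t, fun δ hδ => ?_⟩
  rwa [cost_flip_self]

/-- `C(t→c) = C(t→flip c)`, hence `c ∈ Γ_δ(t) ↔ flip c ∈ Γ_δ(t)`; in particular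
`C(t→flip t) = 0`, so `flip t ∈ Γ_δ(t)` for every `δ ≥ 0`. -/
theorem cost_flip_right {n : ℕ} (hn : 2 ≤ n) (t c : Fin n → Bool) :
    cost t c = cost t (flip c) ∧
    (∀ δ : ℝ, 0 ≤ δ → (cost t c ≤ δ ↔ cost t (flip c) ≤ δ)) ∧
    cost t (flip t) = 0 ∧
    (∀ δ : ℝ, 0 ≤ δ → cost t (flip t) ≤ δ) :=
  cost_flip_right_general t c

end Oracle
end

section
/- Let t and c be classifiers on a finite universe X of n ≥ 2 individuals, let δ ≥ 0, and suppose c is δ-faithful to t. Then min{|G00(t,c)|, |G01(t,c)|} ≤ √(δ/2)·n and min{|G10(t,c)|, |G11(t,c)|} ≤ √(δ/2)·n. -/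
/-!
Individuals `i ∈ G00(t, c)` and `j ∈ G01(t, c)` are treated alike by `t` but differently by `c`,
so each such pair `{i, j}` is paid for in the transportation cost. Hence
`|G00| · |G01| ≤ C(t → c) · binom(n, 2) ≤ δ n² / 2`, and the smaller of the two quadrants has at
most `√(|G00| · |G01|) ≤ √(δ/2) · n` elements; likewise for `G10` and `G11`.
-/

open Finset

namespace Oracle

variable {n : ℕ}

def G00 (u v : Fin n → Bool) : Finset (Fin n) :=
  Finset.univ.filter (fun i => u i = false ∧ v i = false)
def G01 (u v : Fin n → Bool) : Finset (Fin n) :=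
  Finset.univ.filter (fun i => u i = false ∧ v i = true)
def G10 (u v : Fin n → Bool) : Finset (Fin n) :=
  Finset.univ.filter (fun i => u i = true ∧ v i = false)
def G11 (u v : Fin n → Bool) : Finset (Fin n) :=
  Finset.univ.filter (fun i => u i = true ∧ v i = true)

end Oracle

theorem Real.min_le_sqrt_mul (x y : ℝ) : min x y ≤ √(x * y) := by
  rcases lt_or_ge (min x y) 0 with hneg | hnonneg
  · exact hneg.le.trans (Real.sqrt_nonneg _)
  · refine Real.le_sqrt_of_sq_le ?_
    rw [sq]
    exact mul_le_mul (min_le_left x y) (min_le_right x y) hnonneg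
      (hnonneg.trans (min_le_left x y))

/-- Sorting the pair `(a, b)` into `(min a b, max a b)` is injective on `A ×ˢ B`, since a pair and
its swap cannot both lie in `A ×ˢ B` when `r` is irreflexive. -/
theorem Finset.card_mul_card_le_card_filter_lt {α : Type*} [LinearOrder α] [Fintype α]
    {r : α → α → Prop} [DecidableRel r] (hsymm : ∀ a b, r a b → r b a) (hirrefl : ∀ a, ¬ r a a)
    {A B : Finset α} (hAB : ∀ a ∈ A, ∀ b ∈ B, r a b) :
    #A * #B ≤ #(univ.filter fun p : α × α => p.1 < p.2 ∧ r p.1 p.2) := by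
  rw [← card_product]
  refine card_le_card_of_injOn (fun p => (min p.1 p.2, max p.1 p.2)) ?_ ?_
  · rintro ⟨a, b⟩ hab
    simp only [coe_product, Set.mem_prod, mem_coe] at hab
    have hr := hAB a hab.1 b hab.2
    have hne : a ≠ b := fun h => hirrefl b (h ▸ hr)
    simp only [coe_filter, mem_univ, true_and, Set.mem_ofPred_eq, min_lt_max.mpr hne]
    rcases le_total a b with h | h
    · simpa [h] using hr
    · simpa [h] using hsymm a b hr
  · rintro ⟨a, b⟩ hab ⟨a', b'⟩ hab' heq
    simp only [coe_product, Set.mem_prod, mem_coe] at hab hab'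
    simp only [Prod.mk.injEq] at heq ⊢
    have hswap : ¬ (a = b' ∧ b = a') := by
      rintro ⟨rfl, rfl⟩
      exact hirrefl _ (hAB _ hab.1 _ hab'.2)
    rcases le_total a b with h | h <;> rcases le_total a' b' with h' | h' <;>
      simp only [min_eq_left, min_eq_right, max_eq_left, max_eq_right, h, h'] at heq <;>
      grind

namespace Oracle

theorem cost_nonneg (t c : Fin n → Bool) : 0 ≤ cost t c := by
  unfold cost
  positivity

/-- When `n < 2` both sides vanish: `n.choose 2 = 0`, and there is no pair `p.1 < p.2`. -/
theorem cost_mul_choose_two (t c : Fin n → Bool) :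
    cost t c * n.choose 2 =
      #(univ.filter fun p : Fin n × Fin n => p.1 < p.2 ∧ t p.1 = t p.2 ∧ c p.1 ≠ c p.2) := by
  rcases lt_or_ge n 2 with hn | hn
  · have hempty : univ.filter (fun p : Fin n × Fin n => p.1 < p.2 ∧ t p.1 = t p.2 ∧ c p.1 ≠ c p.2)
        = ∅ := filter_false_of_mem fun p _ h => by omega
    simp [Nat.choose_eq_zero_of_lt hn, hempty]
  · have hchoose : (n.choose 2 : ℝ) ≠ 0 := by exact_mod_cast (Nat.choose_pos hn).ne'
    exact div_mul_cancel₀ _ hchoose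

theorem choose_two_le_sq_div_two (n : ℕ) : (n.choose 2 : ℝ) ≤ n ^ 2 / 2 := by
  rw [Nat.cast_choose_two]
  gcongr
  nlinarith [(Nat.cast_nonneg n : (0 : ℝ) ≤ n)]

theorem card_mul_card_quadrant_le_cost_mul_sq {δ : ℝ} (t c : Fin n → Bool)
    (hfaithful : cost t c ≤ δ) (b : Bool) :
    (#(univ.filter fun i => t i = b ∧ c i = false) : ℝ) *
        #(univ.filter fun i => t i = b ∧ c i = true) ≤ δ / 2 * n ^ 2 := by
  have hcard := card_mul_card_le_card_filter_lt (r := fun i j => t i = t j ∧ c i ≠ c j)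
    (fun i j h => ⟨h.1.symm, Ne.symm h.2⟩) (fun i h => h.2 rfl)
    (A := univ.filter fun i => t i = b ∧ c i = false)
    (B := univ.filter fun i => t i = b ∧ c i = true)
    (fun i hi j hj => by simp_all)
  calc (#(univ.filter fun i => t i = b ∧ c i = false) : ℝ) *
          #(univ.filter fun i => t i = b ∧ c i = true)
      ≤ cost t c * n.choose 2 := by rw [cost_mul_choose_two]; exact_mod_cast hcard
    _ ≤ δ * (n ^ 2 / 2) :=
        mul_le_mul hfaithful (choose_two_le_sq_div_two n) (by positivity)
          ((cost_nonneg t c).trans hfaithful)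
    _ = δ / 2 * n ^ 2 := by ring

theorem faithful_min_quadrant_le_general {n : ℕ} {δ : ℝ}
    (t c : Fin n → Bool) (hfaithful : cost t c ≤ δ) :
    min ((G00 t c).card : ℝ) ((G01 t c).card : ℝ) ≤ Real.sqrt (δ/2) * n ∧
    min ((G10 t c).card : ℝ) ((G11 t c).card : ℝ) ≤ Real.sqrt (δ/2) * n := by
  have hquadrant (b : Bool) :
      min (#(univ.filter fun i => t i = b ∧ c i = false) : ℝ)
          #(univ.filter fun i => t i = b ∧ c i = true) ≤ Real.sqrt (δ/2) * n :=
    calc _ ≤ √((#(univ.filter fun i => t i = b ∧ c i = false) : ℝ) *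
              #(univ.filter fun i => t i = b ∧ c i = true)) := Real.min_le_sqrt_mul _ _
      _ ≤ √(δ / 2 * n ^ 2) :=
          Real.sqrt_le_sqrt (card_mul_card_quadrant_le_cost_mul_sq t c hfaithful b)
      _ = √(δ / 2) * n := by rw [Real.sqrt_mul' _ (by positivity), Real.sqrt_sq (by positivity)]
  exact ⟨hquadrant false, hquadrant true⟩

/-- If `c` is `δ`-faithful to `t`, then in each of the two quadrant pairs, the smaller
quadrant has at most `√(δ/2)·n` elements. -/
theorem faithful_min_quadrant_le {n : ℕ} (hn : 2 ≤ n) {δ : ℝ} (hδ : 0 ≤ δ)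
    (t c : Fin n → Bool) (hfaithful : cost t c ≤ δ) :
    min ((G00 t c).card : ℝ) ((G01 t c).card : ℝ) ≤ Real.sqrt (δ/2) * n ∧
    min ((G10 t c).card : ℝ) ((G11 t c).card : ℝ) ≤ Real.sqrt (δ/2) * n :=
  faithful_min_quadrant_le_general t c hfaithful

end Oracle
end

section
/- Let t and c be classifiers on a finite universe X of n ≥ 2 individuals, let δ ≥ 0, and suppose c is δ-faithful to t and c is δ-balanced. Then c is in close alignment with t or c is in close alignment with f(t); that is, either both |G01(t,c)| ≤ √(δ/2)·n and |G10(t,c)| ≤ √(δ/2)·n hold, or both |G00(t,c)| ≤ √(δ/2)·n and |G11(t,c)| ≤ √(δ/2)·n hold. -/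
open Finset

namespace Oracle

variable {n : ℕ}

/-- `p` and `q` are in close alignment: `|p⁰ ∩ q¹| ≤ √(δ/2)·n` and `|q⁰ ∩ p¹| ≤ √(δ/2)·n`. -/
def closeAlign (δ : ℝ) (p q : Fin n → Bool) : Prop :=
  ((zeros p ∩ ones q).card : ℝ) ≤ Real.sqrt (δ/2) * n ∧
  ((zeros q ∩ ones p).card : ℝ) ≤ Real.sqrt (δ/2) * n

/-- A classifier is `δ`-balanced if `|c⁰| > √(2δ)·n` and `|c¹| > √(2δ)·n`. -/
def balanced (δ : ℝ) (c : Fin n → Bool) : Prop :=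
  Real.sqrt (2*δ) * n < ((zeros c).card : ℝ) ∧ Real.sqrt (2*δ) * n < ((ones c).card : ℝ)

/-!
Write `a, b, e, d` for the sizes of the quadrants `G00, G01, G10, G11` of `(t, c)`. The pairs
that `t` treats alike and `c` does not are exactly those joining `G00` to `G01` or `G10` to `G11`,
so faithfulness gives `a b + e d ≤ δ·C(n,2) ≤ s²` with `s = √(δ/2)·n`; hence `min(a, b) ≤ s` and
`min(e, d) ≤ s`. Balance (`a + e > 2s`, `b + d > 2s`) forbids `a, e ≤ s` and `b, d ≤ s`, which
leaves `b, e ≤ s` or `a, d ≤ s`.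
-/

theorem le_or_le_of_mul_le_sq {α : Type*} [Semiring α] [LinearOrder α] [IsStrictOrderedRing α]
    {a b s : α} (hs : 0 ≤ s) (h : a * b ≤ s ^ 2) : a ≤ s ∨ b ≤ s := by
  by_contra! hab
  exact (mul_lt_mul'' hab.1 hab.2 hs hs).not_ge (sq s ▸ h)

theorem quadrant_dichotomy {α : Type*} [Semiring α] [LinearOrder α] [IsStrictOrderedRing α]
    {a b e d s : α} (ha : 0 ≤ a) (hb : 0 ≤ b) (he : 0 ≤ e) (hd : 0 ≤ d) (hs : 0 ≤ s)
    (hprod : a * b + e * d ≤ s ^ 2) (hae : 2 * s < a + e) (hbd : 2 * s < b + d) :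
    (b ≤ s ∧ e ≤ s) ∨ (a ≤ s ∧ d ≤ s) := by
  have hab : a * b ≤ s ^ 2 := le_of_add_le_of_nonneg_left hprod (mul_nonneg he hd)
  have hed : e * d ≤ s ^ 2 := le_of_add_le_of_nonneg_right hprod (mul_nonneg ha hb)
  rcases le_or_le_of_mul_le_sq hs hab with has | hbs
  · exact Or.inr ⟨has, (le_or_le_of_mul_le_sq hs hed).resolve_left fun hes =>
      hae.not_ge (two_mul s ▸ add_le_add has hes)⟩
  · exact Or.inl ⟨hbs, (le_or_le_of_mul_le_sq hs hed).resolve_right fun hds =>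
      hbd.not_ge (two_mul s ▸ add_le_add hbs hds)⟩

theorem sqrt_two_mul_eq_two_mul_sqrt_half (x : ℝ) : √(2 * x) = 2 * √(x / 2) := by
  rw [show 2 * x = 2 ^ 2 * (x / 2) by ring, Real.sqrt_mul (by positivity),
    Real.sqrt_sq zero_le_two]

theorem card_zeros_eq (t c : Fin n → Bool) : #(zeros c) = #(G00 t c) + #(G10 t c) := by
  rw [← card_filter_add_card_filter_not (s := zeros c) (fun i => t i = false)]
  congr 2 <;> ext i <;> grind [zeros, G00, G10]

theorem card_ones_eq (t c : Fin n → Bool) : #(ones c) = #(G01 t c) + #(G11 t c) := by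
  rw [← card_filter_add_card_filter_not (s := ones c) (fun i => t i = false)]
  congr 2 <;> ext i <;> grind [ones, G01, G11]

def discordantPairs (t c : Fin n → Bool) : Finset (Fin n × Fin n) :=
  univ.filter fun p => p.1 < p.2 ∧ t p.1 = t p.2 ∧ c p.1 ≠ c p.2

theorem card_discordantPairs (t c : Fin n → Bool) :
    #(discordantPairs t c) = #(G00 t c) * #(G01 t c) + #(G10 t c) * #(G11 t c) := by
  have hdisj : Disjoint (G00 t c ×ˢ G01 t c) (G10 t c ×ˢ G11 t c) := by
    simp +contextual [Finset.disjoint_left, G00, G10]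
  rw [← card_product, ← card_product, ← card_union_of_disjoint hdisj]
  symm
  apply card_nbij' (fun p => (min p.1 p.2, max p.1 p.2))
    (fun p => if c p.1 = false then p else p.swap) <;>
  · rintro ⟨i, j⟩ h
    grind [discordantPairs, G00, G01, G10, G11]

theorem card_discordantPairs_le_of_cost_le (hn : 2 ≤ n) {δ : ℝ} (hδ : 0 ≤ δ)
    {t c : Fin n → Bool} (h : cost t c ≤ δ) :
    (#(discordantPairs t c) : ℝ) ≤ (√(δ / 2) * n) ^ 2 := by
  have hchoose : (0 : ℝ) < n.choose 2 := by exact_mod_cast Nat.choose_pos hn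
  calc (#(discordantPairs t c) : ℝ)
      ≤ δ * n.choose 2 := (div_le_iff₀ hchoose).1 h
    _ = δ * (n * (n - 1) / 2) := by rw [Nat.cast_choose_two]
    _ ≤ δ * (n ^ 2 / 2) := by gcongr; nlinarith
    _ = (√(δ / 2) * n) ^ 2 := by rw [mul_pow, Real.sq_sqrt (by positivity)]; ring

/-- If `c` is `δ`-faithful to `t` and `δ`-balanced, then `c` is in close alignment with
`t` or with `flip t`: either both `|G01(t,c)| ≤ √(δ/2)·n` and `|G10(t,c)| ≤ √(δ/2)·n`,
or both `|G00(t,c)| ≤ √(δ/2)·n` and `|G11(t,c)| ≤ √(δ/2)·n`. -/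
theorem faithful_balanced_closeAlign {n : ℕ} (hn : 2 ≤ n) {δ : ℝ} (hδ : 0 ≤ δ)
    (t c : Fin n → Bool) (hfaithful : cost t c ≤ δ) (hbal : balanced δ c) :
    (((G01 t c).card : ℝ) ≤ Real.sqrt (δ/2) * n ∧
     ((G10 t c).card : ℝ) ≤ Real.sqrt (δ/2) * n) ∨
    (((G00 t c).card : ℝ) ≤ Real.sqrt (δ/2) * n ∧
     ((G11 t c).card : ℝ) ≤ Real.sqrt (δ/2) * n) := by
  have hpairs := card_discordantPairs_le_of_cost_le hn hδ hfaithful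
  rw [card_discordantPairs] at hpairs
  obtain ⟨hzeros, hones⟩ := hbal
  rw [sqrt_two_mul_eq_two_mul_sqrt_half, mul_assoc, card_zeros_eq t] at hzeros
  rw [sqrt_two_mul_eq_two_mul_sqrt_half, mul_assoc, card_ones_eq t] at hones
  push_cast at hpairs hzeros hones
  exact quadrant_dichotomy (by positivity) (by positivity) (by positivity) (by positivity)
    (by positivity) hpairs hzeros hones

end Oracle
end

section
/- Let t, u, v be classifiers on a finite universe X of n individuals and let δ ≥ 0. If u is in close alignment with t and v is in close alignment with f(t), then |G00(u,v)| = |u^0 ∩ v^0| ≤ √(2δ)·n and |G11(u,v)| = |u^1 ∩ v^1| ≤ √(2δ)·n. -/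
/-!
Whatever `t i` is, an individual with `u i = v i` disagrees either with `t` at `u` or with
`flip t` at `v`. So `G00 u v` and `G11 u v` are covered by two of the disagreement sets bounded
by close alignment, and the union bound gives `2 √(δ/2) n = √(2δ) n`.
-/

open Finset

namespace Oracle

variable {n : ℕ}

theorem G00_eq_zeros_inter_zeros (u v : Fin n → Bool) : G00 u v = zeros u ∩ zeros v := by
  ext i
  simp [G00, zeros]

theorem G11_eq_ones_inter_ones (u v : Fin n → Bool) : G11 u v = ones u ∩ ones v := by
  ext i
  simp [G11, ones]

theorem zeros_inter_zeros_subset (t u v : Fin n → Bool) :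
    zeros u ∩ zeros v ⊆ (zeros u ∩ ones t) ∪ (zeros v ∩ ones (flip t)) := by
  intro i
  cases t i <;> simp_all [zeros, ones, flip]

theorem ones_inter_ones_subset (t u v : Fin n → Bool) :
    ones u ∩ ones v ⊆ (zeros t ∩ ones u) ∪ (zeros (flip t) ∩ ones v) := by
  intro i
  cases t i <;> simp_all [zeros, ones, flip]

theorem card_le_sqrt_two_mul_of_subset_union {α : Type*} [DecidableEq α] {δ : ℝ} {N : ℕ}
    {s A B : Finset α} (hs : s ⊆ A ∪ B) (hA : (#A : ℝ) ≤ √(δ / 2) * N)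
    (hB : (#B : ℝ) ≤ √(δ / 2) * N) : (#s : ℝ) ≤ √(2 * δ) * N := by
  have hcard : (#s : ℝ) ≤ #A + #B := by
    exact_mod_cast (card_le_card hs).trans (card_union_le A B)
  rw [sqrt_two_mul_eq_two_mul_sqrt_half]
  linarith

theorem closeAlign_flipped_targets_general {n : ℕ} {δ : ℝ} (t u v : Fin n → Bool)
    (hu : closeAlign δ u t) (hv : closeAlign δ v (flip t)) :
    (G00 u v).card = (zeros u ∩ zeros v).card ∧
    ((G00 u v).card : ℝ) ≤ Real.sqrt (2*δ) * n ∧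
    (G11 u v).card = (ones u ∩ ones v).card ∧
    ((G11 u v).card : ℝ) ≤ Real.sqrt (2*δ) * n := by
  rw [G00_eq_zeros_inter_zeros, G11_eq_ones_inter_ones]
  exact ⟨rfl, card_le_sqrt_two_mul_of_subset_union (zeros_inter_zeros_subset t u v) hu.1 hv.1,
    rfl, card_le_sqrt_two_mul_of_subset_union (ones_inter_ones_subset t u v) hu.2 hv.2⟩

/-- If `u` is in close alignment with `t` and `v` with `flip t`, then
`|G00(u,v)| = |u⁰ ∩ v⁰| ≤ √(2δ)·n` and `|G11(u,v)| = |u¹ ∩ v¹| ≤ √(2δ)·n`. -/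
theorem closeAlign_flipped_targets {n : ℕ} {δ : ℝ} (hδ : 0 ≤ δ) (t u v : Fin n → Bool)
    (hu : closeAlign δ u t) (hv : closeAlign δ v (flip t)) :
    (G00 u v).card = (zeros u ∩ zeros v).card ∧
    ((G00 u v).card : ℝ) ≤ Real.sqrt (2*δ) * n ∧
    (G11 u v).card = (ones u ∩ ones v).card ∧
    ((G11 u v).card : ℝ) ≤ Real.sqrt (2*δ) * n :=
  closeAlign_flipped_targets_general t u v hu hv

end Oracle
end

section
/- Let t, u, v be classifiers on a finite universe X of n individuals, let δ ≥ 0, and suppose u and v are both in close alignment with t and |t^0| > 2√(2δ)·n and |t^1| > 2√(2δ)·n. Then |G00(u,v)| > √(2δ)·n and |G11(u,v)| > √(2δ)·n, while |G01(u,v)| ≤ √(2δ)·n and |G10(u,v)| ≤ √(2δ)·n. In particular min{|G00(u,v)|, |G01(u,v)|} ≤ √(2δ)·n < max{|G00(u,v)|, |G01(u,v)|} and min{|G10(u,v)|, |G11(u,v)|} ≤ √(2δ)·n < max{|G10(u,v)|, |G11(u,v)|}, i.e., the pair (u,v) passes the CheckSituationA test. -/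
open Finset

namespace Oracle

variable {n : ℕ}

/-!
A point where `u` and `v` disagree is a point where one of them disagrees with `t`, so close
alignment bounds `|G01(u,v)|` and `|G10(u,v)|` by `2·√(δ/2)·n = √(2δ)·n`. Likewise every point of
`t⁰` outside `G00(u,v)` is a disagreement of `u` or `v` with `t`, so
`|G00(u,v)| ≥ |t⁰| - √(2δ)·n > √(2δ)·n`, and symmetrically for `G11(u,v)` and `t¹`.
-/

lemma G10_eq_G01_swap (u v : Fin n → Bool) : G10 u v = G01 v u := by
  ext i
  simp only [G10, G01, mem_filter, mem_univ, true_and, and_comm]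

lemma card_G01_le (t u v : Fin n → Bool) :
    #(G01 u v) ≤ #(zeros u ∩ ones t) + #(zeros t ∩ ones v) := by
  refine (card_le_card fun i hi => ?_).trans (card_union_le _ _)
  simp only [G01, zeros, ones, mem_filter, mem_union, mem_inter, mem_univ, true_and] at hi ⊢
  cases t i <;> simp [hi]

lemma card_zeros_le (t u v : Fin n → Bool) :
    #(zeros t) ≤ #(G00 u v) + #(zeros t ∩ ones u) + #(zeros t ∩ ones v) := by
  refine (card_le_card fun i hi => ?_).trans <|
    (card_union_le _ _).trans (Nat.add_le_add_right (card_union_le _ _) _)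
  simp only [G00, zeros, ones, mem_filter, mem_union, mem_inter, mem_univ, true_and] at hi ⊢
  cases u i <;> cases v i <;> simp [hi]

lemma card_ones_le (t u v : Fin n → Bool) :
    #(ones t) ≤ #(G11 u v) + #(zeros u ∩ ones t) + #(zeros v ∩ ones t) := by
  refine (card_le_card fun i hi => ?_).trans <|
    (card_union_le _ _).trans (Nat.add_le_add_right (card_union_le _ _) _)
  simp only [G11, zeros, ones, mem_filter, mem_union, mem_inter, mem_univ, true_and] at hi ⊢
  cases u i <;> cases v i <;> simp [hi]

lemma two_mul_sqrt_half (δ : ℝ) : 2 * √(δ / 2) = √(2 * δ) := by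
  rw [show δ / 2 = 2 * δ / 2 ^ 2 by ring, Real.sqrt_div' _ (by positivity),
    Real.sqrt_sq zero_le_two]
  ring

namespace closeAlign

variable {δ : ℝ} {t u v : Fin n → Bool}

lemma card_G01_le (hu : closeAlign δ u t) (hv : closeAlign δ v t) :
    (#(G01 u v) : ℝ) ≤ √(2 * δ) * n := by
  have : (#(G01 u v) : ℝ) ≤ #(zeros u ∩ ones t) + #(zeros t ∩ ones v) := by
    exact_mod_cast Oracle.card_G01_le t u v
  rw [← two_mul_sqrt_half]
  linarith [hu.1, hv.2]

lemma card_zeros_le (hu : closeAlign δ u t) (hv : closeAlign δ v t) :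
    (#(zeros t) : ℝ) ≤ #(G00 u v) + √(2 * δ) * n := by
  have : (#(zeros t) : ℝ) ≤ #(G00 u v) + #(zeros t ∩ ones u) + #(zeros t ∩ ones v) := by
    exact_mod_cast Oracle.card_zeros_le t u v
  rw [← two_mul_sqrt_half]
  linarith [hu.2, hv.2]

lemma card_ones_le (hu : closeAlign δ u t) (hv : closeAlign δ v t) :
    (#(ones t) : ℝ) ≤ #(G11 u v) + √(2 * δ) * n := by
  have : (#(ones t) : ℝ) ≤ #(G11 u v) + #(zeros u ∩ ones t) + #(zeros v ∩ ones t) := by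
    exact_mod_cast Oracle.card_ones_le t u v
  rw [← two_mul_sqrt_half]
  linarith [hu.1, hv.1]

end closeAlign

theorem closeAlign_passes_checkSituationA_general {n : ℕ} {δ : ℝ}
    (t u v : Fin n → Bool)
    (hu : closeAlign δ u t) (hv : closeAlign δ v t)
    (ht0 : 2 * Real.sqrt (2*δ) * n < ((zeros t).card : ℝ))
    (ht1 : 2 * Real.sqrt (2*δ) * n < ((ones t).card : ℝ)) :
    (Real.sqrt (2*δ) * n < ((G00 u v).card : ℝ) ∧
     Real.sqrt (2*δ) * n < ((G11 u v).card : ℝ) ∧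
     ((G01 u v).card : ℝ) ≤ Real.sqrt (2*δ) * n ∧
     ((G10 u v).card : ℝ) ≤ Real.sqrt (2*δ) * n) ∧
    (min ((G00 u v).card : ℝ) ((G01 u v).card : ℝ) ≤ Real.sqrt (2*δ) * n ∧
     Real.sqrt (2*δ) * n < max ((G00 u v).card : ℝ) ((G01 u v).card : ℝ) ∧
     min ((G10 u v).card : ℝ) ((G11 u v).card : ℝ) ≤ Real.sqrt (2*δ) * n ∧
     Real.sqrt (2*δ) * n < max ((G10 u v).card : ℝ) ((G11 u v).card : ℝ)) := by
  have k01 := hu.card_G01_le hv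
  have k10 : (#(G10 u v) : ℝ) ≤ √(2 * δ) * n := G10_eq_G01_swap u v ▸ hv.card_G01_le hu
  have k00 : √(2 * δ) * n < #(G00 u v) := by linarith [hu.card_zeros_le hv]
  have k11 : √(2 * δ) * n < #(G11 u v) := by linarith [hu.card_ones_le hv]
  exact ⟨⟨k00, k11, k01, k10⟩, min_le_of_right_le k01, lt_max_of_lt_left k00,
    min_le_of_left_le k10, lt_max_of_lt_right k11⟩

/-- If `u` and `v` are both in close alignment with `t` and both sides of `t` have more than
`2√(2δ)·n` elements, then `|G00(u,v)|, |G11(u,v)| > √(2δ)·n` while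
`|G01(u,v)|, |G10(u,v)| ≤ √(2δ)·n`; in particular the pair `(u,v)` passes the
CheckSituationA test. -/
theorem closeAlign_passes_checkSituationA {n : ℕ} {δ : ℝ} (hδ : 0 ≤ δ)
    (t u v : Fin n → Bool)
    (hu : closeAlign δ u t) (hv : closeAlign δ v t)
    (ht0 : 2 * Real.sqrt (2*δ) * n < ((zeros t).card : ℝ))
    (ht1 : 2 * Real.sqrt (2*δ) * n < ((ones t).card : ℝ)) :
    (Real.sqrt (2*δ) * n < ((G00 u v).card : ℝ) ∧
     Real.sqrt (2*δ) * n < ((G11 u v).card : ℝ) ∧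
     ((G01 u v).card : ℝ) ≤ Real.sqrt (2*δ) * n ∧
     ((G10 u v).card : ℝ) ≤ Real.sqrt (2*δ) * n) ∧
    (min ((G00 u v).card : ℝ) ((G01 u v).card : ℝ) ≤ Real.sqrt (2*δ) * n ∧
     Real.sqrt (2*δ) * n < max ((G00 u v).card : ℝ) ((G01 u v).card : ℝ) ∧
     min ((G10 u v).card : ℝ) ((G11 u v).card : ℝ) ≤ Real.sqrt (2*δ) * n ∧
     Real.sqrt (2*δ) * n < max ((G10 u v).card : ℝ) ((G11 u v).card : ℝ)) :=
  closeAlign_passes_checkSituationA_general t u v hu hv ht0 ht1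

end Oracle
end

section
/- Let t and v be classifiers on a finite universe X of n ≥ 2 individuals, and let w = MergeOnes(t, v). Then w^0 ⊆ t^0 and C(t→w) ≤ C(t→v). Consequently, for every δ ≥ 0, if v ∈ Γ_δ(t) then MergeOnes(t, v) ∈ Γ_δ(t). -/
open Finset

namespace Oracle

variable {n : ℕ}

/-- `MergeOnes(t, v)`: the classifier whose set of ones is `t¹ ∪ v¹`. -/
def mergeOnes2 (t v : Fin n → Bool) : Fin n → Bool := fun i => t i || v i

lemma cost_le_cost_of_imp {t c c' : Fin n → Bool}
    (h : ∀ i j, t i = t j → c i ≠ c j → c' i ≠ c' j) : cost t c ≤ cost t c' := by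
  unfold cost
  gcongr ?_ / _
  refine Nat.cast_le.mpr (card_le_card (monotone_filter_right _ ?_))
  rintro _ - ⟨hlt, ht, hc⟩
  exact ⟨hlt, ht, h _ _ ht hc⟩

lemma zeros_mergeOnes2_subset (t v : Fin n → Bool) : zeros (mergeOnes2 t v) ⊆ zeros t := by
  intro i hi
  simp only [zeros, mergeOnes2, mem_filter, mem_univ, true_and, Bool.or_eq_false_iff] at hi ⊢
  exact hi.1

/-- Where `t` agrees, `mergeOnes2 t v` is either constantly `true` or equal to `v`. -/
lemma ne_of_mergeOnes2_ne {t v : Fin n → Bool} {i j : Fin n} (ht : t i = t j)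
    (hw : mergeOnes2 t v i ≠ mergeOnes2 t v j) : v i ≠ v j := by
  unfold mergeOnes2 at hw
  cases h : t i <;> simp_all

lemma cost_mergeOnes2_le (t v : Fin n → Bool) : cost t (mergeOnes2 t v) ≤ cost t v :=
  cost_le_cost_of_imp fun _ _ => ne_of_mergeOnes2_ne

theorem mergeOnes_faithful_general {n : ℕ} (t v : Fin n → Bool) :
    zeros (mergeOnes2 t v) ⊆ zeros t ∧
    cost t (mergeOnes2 t v) ≤ cost t v ∧
    (∀ δ : ℝ, 0 ≤ δ → cost t v ≤ δ → cost t (mergeOnes2 t v) ≤ δ) :=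
  ⟨zeros_mergeOnes2_subset t v, cost_mergeOnes2_le t v,
    fun _ _ hv => (cost_mergeOnes2_le t v).trans hv⟩

/-- For `w = MergeOnes(t,v)`: `w⁰ ⊆ t⁰` and `C(t→w) ≤ C(t→v)`; consequently
`v ∈ Γ_δ(t)` implies `MergeOnes(t,v) ∈ Γ_δ(t)`. -/
theorem mergeOnes_faithful {n : ℕ} (hn : 2 ≤ n) (t v : Fin n → Bool) :
    zeros (mergeOnes2 t v) ⊆ zeros t ∧
    cost t (mergeOnes2 t v) ≤ cost t v ∧
    (∀ δ : ℝ, 0 ≤ δ → cost t v ≤ δ → cost t (mergeOnes2 t v) ≤ δ) :=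
  mergeOnes_faithful_general t v

end Oracle
end

section
/- Let t, v_1, …, v_k be classifiers on a finite universe X of n ≥ 2 individuals, and let w = MergeOnes(t, v_1, …, v_k). Then w^0 ⊆ t^0 and C(t→w) ≤ C(t→v_1) + C(t→v_2) + … + C(t→v_k). -/
/-! A pair on which `t` and every `vₗ` agree is not split by the merge, so every pair counted by
`C(t→w)` is counted by some `C(t→vₗ)`; a union bound finishes. -/

open Finset

namespace Oracle

variable {n : ℕ}

/-- `MergeOnes(p₁, …, pₖ)`: the classifier whose set of ones is `p₁¹ ∪ ⋯ ∪ pₖ¹`. -/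
def mergeOnesFam {k : ℕ} (t : Fin n → Bool) (v : Fin k → (Fin n → Bool)) : Fin n → Bool :=
  fun i => t i || decide (∃ l, v l i = true)

def splitPairs (t c : Fin n → Bool) : Finset (Fin n × Fin n) :=
  univ.filter fun p => p.1 < p.2 ∧ t p.1 = t p.2 ∧ c p.1 ≠ c p.2

theorem cost_eq_card_splitPairs (t c : Fin n → Bool) :
    cost t c = (splitPairs t c).card / (n.choose 2 : ℝ) :=
  rfl

theorem splitPairs_subset_biUnion {k : ℕ} {t w : Fin n → Bool} {v : Fin k → Fin n → Bool}
    (h : ∀ i j, t i = t j → w i ≠ w j → ∃ l, v l i ≠ v l j) :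
    splitPairs t w ⊆ univ.biUnion fun l => splitPairs t (v l) := by
  intro p hp
  simp only [splitPairs, mem_filter, mem_univ, true_and, mem_biUnion] at hp ⊢
  obtain ⟨hlt, ht, hw⟩ := hp
  obtain ⟨l, hl⟩ := h p.1 p.2 ht hw
  exact ⟨l, hlt, ht, hl⟩

theorem cost_le_sum_of_forall_exists {k : ℕ} {t w : Fin n → Bool} {v : Fin k → Fin n → Bool}
    (h : ∀ i j, t i = t j → w i ≠ w j → ∃ l, v l i ≠ v l j) :
    cost t w ≤ ∑ l, cost t (v l) := by
  have hcard : ((splitPairs t w).card : ℝ) ≤ ∑ l, ((splitPairs t (v l)).card : ℝ) := by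
    exact_mod_cast (card_le_card (splitPairs_subset_biUnion h)).trans card_biUnion_le
  simp only [cost_eq_card_splitPairs, ← sum_div]
  exact div_le_div_of_nonneg_right hcard (Nat.cast_nonneg _)

theorem zeros_mergeOnesFam_subset {k : ℕ} (t : Fin n → Bool) (v : Fin k → Fin n → Bool) :
    zeros (mergeOnesFam t v) ⊆ zeros t := by
  intro i hi
  simp only [zeros, mem_filter, mem_univ, true_and, mergeOnesFam,
    Bool.or_eq_false_iff] at hi ⊢
  exact hi.1

theorem mergeOnesFam_eq_of_forall_eq {k : ℕ} {t : Fin n → Bool} {v : Fin k → Fin n → Bool}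
    {i j : Fin n} (ht : t i = t j) (hv : ∀ l, v l i = v l j) :
    mergeOnesFam t v i = mergeOnesFam t v j := by
  simp only [mergeOnesFam, ht, hv]

theorem mergeOnes_family_cost_general {n k : ℕ}
    (t : Fin n → Bool) (v : Fin k → (Fin n → Bool)) :
    zeros (mergeOnesFam t v) ⊆ zeros t ∧
    cost t (mergeOnesFam t v) ≤ ∑ l : Fin k, cost t (v l) := by
  refine ⟨zeros_mergeOnesFam_subset t v, cost_le_sum_of_forall_exists ?_⟩
  intro i j ht hw
  by_contra! hv
  exact hw (mergeOnesFam_eq_of_forall_eq ht hv)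

/-- For `w = MergeOnes(t, v₁, …, vₖ)`: `w⁰ ⊆ t⁰` and
`C(t→w) ≤ C(t→v₁) + ⋯ + C(t→vₖ)`. -/
theorem mergeOnes_family_cost {n k : ℕ} (hn : 2 ≤ n)
    (t : Fin n → Bool) (v : Fin k → (Fin n → Bool)) :
    zeros (mergeOnesFam t v) ⊆ zeros t ∧
    cost t (mergeOnesFam t v) ≤ ∑ l : Fin k, cost t (v l) :=
  mergeOnes_family_cost_general t v

end Oracle
end
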